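/- arXiv:1302.1936 — 2 statements merged into one kernel-verified Lean document; each statement's English description precedes it below -/
import Mathlib

section
/- Cyclic equivalence of potentials is an equivalence relation compatible with Jacobian ideals: if potentials S and S' on a quiver Q are cyclically equivalent, then J(S) = J(S'), and hence 𝒫(Q,S) = 𝒫(Q,S'). -/
open scoped Classical

/-- A quiver on vertex set `V`: a set of arrows with tail (`src`) and head (`tgt`) maps. -/
structure Quiv (V : Type) where
  A : Type
  src : A → V
  tgt : A → V

namespace Quiv

variable {V : Type} (Q : Quiv V)

/-- `Comp a b` means the arrow `a` can be composed after `b` (t(a) = h(b)). -/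
def Comp (a b : Q.A) : Prop := Q.src a = Q.tgt b

/-- Positive-length paths: nonempty lists `[α₁, …, α_ℓ]` of composable arrows
(function-composition order: `t(α_j) = h(α_{j+1})`). -/
abbrev PathsPos := {l : List Q.A // l ≠ [] ∧ l.Chain' Q.Comp}

/-- Paths: either a lazy path `e_i` at a vertex `i`, or a positive-length path. -/
abbrev Pth := V ⊕ Q.PathsPos

namespace Pth

variable {Q}

/-- The length of a path. -/
def length : Q.Pth → ℕ := Sum.elim (fun _ => 0) (fun l => l.1.length)

/-- The tail `t(p)` (starting vertex) of a path. -/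
def src : Q.Pth → V := Sum.elim id (fun l => Q.src (l.1.getLast l.2.1))

/-- The head `h(p)` (ending vertex) of a path. -/
def tgt : Q.Pth → V := Sum.elim id (fun l => Q.tgt (l.1.head l.2.1))

end Pth

/-- The underlying vector space of the complete path algebra ℂ⟨⟨Q⟩⟩: all possibly
infinite ℂ-linear combinations of paths, encoded as coefficient functions. -/
abbrev CPA := Q.Pth → ℂ

/-- The coefficient of a list of arrows, viewed as a path (with `x` as fallback vertex
for the empty list). -/
noncomputable def coefAt (u : Q.CPA) (x : V) (l : List Q.A) : ℂ :=
  if h : l = [] then u (Sum.inl x)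
  else if hc : l.Chain' Q.Comp then u (Sum.inr ⟨l, h, hc⟩) else 0

/-- The multiplication of the (complete) path algebra, induced by concatenation of
paths: the coefficient of a path `p` in `conv u v` is the (finite) sum over all
splittings `p = p₁ p₂` of `u(p₁) * v(p₂)`. -/
noncomputable def conv (u v : Q.CPA) : Q.CPA := fun p =>
  match p with
  | Sum.inl x => u (Sum.inl x) * v (Sum.inl x)
  | Sum.inr l => ∑ n ∈ Finset.range (l.1.length + 1),
      coefAt Q u (Q.tgt (l.1.head l.2.1)) (l.1.take n) *
      coefAt Q v (Q.src (l.1.getLast l.2.1)) (l.1.drop n)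

/-- The identity element `∑ i e_i` of the path algebra. -/
noncomputable def one : Q.CPA := Sum.elim (fun _ => 1) (fun _ => 0)

/-- The idempotent `e_i` (the length-0 path at vertex `i`). -/
noncomputable def idem (i : V) : Q.CPA := fun p => if p = Sum.inl i then 1 else 0

/-- The arrow `a`, viewed as an element of the path algebra. -/
noncomputable def arrowδ (a : Q.A) : Q.CPA := fun p =>
  if p = Sum.inr ⟨[a], List.cons_ne_nil a [], List.isChain_singleton a⟩ then 1 else 0

/-- A path, viewed as an element of the path algebra. -/
noncomputable def pathδ (p₀ : Q.Pth) : Q.CPA := fun p => if p = p₀ then 1 else 0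

/-- Elements of ℂ⟨⟨Q⟩⟩ with coefficients supported in bounded length, i.e. the
elements of the path algebra ℂ⟨Q⟩ = ⊕_{ℓ≥0} A^ℓ. -/
def Bounded (u : Q.CPA) : Prop := ∃ N : ℕ, ∀ p : Q.Pth, N ≤ p.length → u p = 0

/-- A cycle is a positive-length path which starts and ends at the same vertex. -/
def IsCycle (p : Q.Pth) : Prop := 0 < p.length ∧ p.src = p.tgt

/-- A potential: a (possibly infinite) linear combination of cycles, no two of which
are rotations of each other. -/
def IsPotential (S : Q.CPA) : Prop :=
  (∀ p : Q.Pth, S p ≠ 0 → Q.IsCycle p) ∧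
  ∀ l l' : Q.PathsPos, S (Sum.inr l) ≠ 0 → S (Sum.inr l') ≠ 0 → l.1 ~r l'.1 → l = l'

/-- The cyclic derivative with respect to the arrow `a`:
`∂_a(α₁…α_ℓ) = ∑_k δ_{a,α_k} α_{k+1}…α_ℓα₁…α_{k-1}`, extended by linearity and
continuity.  The coefficient of a path `q` in `∂_a S` is the sum of the coefficients
in `S` of all rotations of the cycle `a·q`. -/
noncomputable def cycDer (a : Q.A) (S : Q.CPA) : Q.CPA := fun p =>
  match p with
  | Sum.inl x =>
      if Q.src a = x ∧ Q.tgt a = x then coefAt Q S x [a] else 0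
  | Sum.inr l => ∑ m ∈ Finset.range (l.1.length + 1),
      coefAt Q S (Q.tgt a) ((a :: l.1).rotate m)

/-- The two-sided ideal generated by a subset of ℂ⟨⟨Q⟩⟩. -/
def idealGen (Sg : Set Q.CPA) : Set Q.CPA :=
  {x | ∃ (n : ℕ) (f g s : Fin n → Q.CPA), (∀ k, s k ∈ Sg) ∧
    x = ∑ k, Q.conv (f k) (Q.conv (s k) (g k))}

/-- The closure of a subset of ℂ⟨⟨Q⟩⟩ in the 𝔪-adic topology. -/
def mAdicCl (T : Set Q.CPA) : Set Q.CPA :=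
  {u | ∀ n : ℕ, ∃ v ∈ T, ∀ p : Q.Pth, p.length < n → u p = v p}

/-- The Jacobian ideal `J(S)`: the closure of the two-sided ideal generated by the
cyclic derivatives of `S`. -/
def jacobIdeal (S : Q.CPA) : Set Q.CPA :=
  Q.mAdicCl (Q.idealGen (Set.range fun a => Q.cycDer a S))

/-- The set of differences `c - c'` where `c` is a cycle and `c'` its rotation. -/
def rotDiffs : Set Q.CPA :=
  {x | ∃ l l' : Q.PathsPos, Q.IsCycle (Sum.inr l) ∧ l'.1 = l.1.rotate 1 ∧
    x = Q.pathδ (Sum.inr l) - Q.pathδ (Sum.inr l')}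

/-- Cyclic equivalence: `S - S'` lies in the closure of the span of the
rotation differences of cycles. -/
def CycEquiv (S S' : Q.CPA) : Prop :=
  S - S' ∈ Q.mAdicCl (Submodule.span ℂ Q.rotDiffs : Submodule ℂ Q.CPA)

end Quiv

/-! The cyclic derivative `∂_a` is linear and `𝔪`-adically continuous: the coefficient of `p`
in `∂_a S` only involves coefficients of `S` of length at most `p.length + 1`. It kills every
rotation difference `c - c.rotate 1`, because the coefficient of `q` in `∂_a c` counts the
rotations of `a q` equal to `c`, and `m ↦ m + 1` matches these with the rotations equal to
`c.rotate 1`. Hence cyclically equivalent potentials have the same cyclic derivatives, so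
their Jacobian ideals have the same generators. -/

theorem List.sum_range_rotate_succ {α M : Type*} [AddCancelCommMonoid M]
    (w : List α) (f : List α → M) :
    ∑ m ∈ Finset.range w.length, f (w.rotate (m + 1)) =
      ∑ m ∈ Finset.range w.length, f (w.rotate m) := by
  apply add_right_cancel (b := f (w.rotate 0))
  rw [← Finset.sum_range_succ' (fun m => f (w.rotate m)), Finset.sum_range_succ,
    List.rotate_length, List.rotate_zero]

namespace Quiv

variable {V : Type} {Q : Quiv V}

lemma cycDer_inl (a : Q.A) (S : Q.CPA) (x : V) :
    Q.cycDer a S (Sum.inl x) = if Q.src a = x ∧ Q.tgt a = x then coefAt Q S x [a] else 0 :=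
  rfl

lemma cycDer_inr (a : Q.A) (S : Q.CPA) (l : Q.PathsPos) :
    Q.cycDer a S (Sum.inr l) =
      ∑ m ∈ Finset.range (l.1.length + 1), coefAt Q S (Q.tgt a) ((a :: l.1).rotate m) :=
  rfl

lemma coefAt_add (u v : Q.CPA) (x : V) (l : List Q.A) :
    coefAt Q (u + v) x l = coefAt Q u x l + coefAt Q v x l := by
  unfold coefAt; split_ifs <;> simp

lemma coefAt_smul (c : ℂ) (u : Q.CPA) (x : V) (l : List Q.A) :
    coefAt Q (c • u) x l = c * coefAt Q u x l := by
  unfold coefAt; split_ifs <;> simp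

variable (Q) in
noncomputable def cycDerₗ (a : Q.A) : Q.CPA →ₗ[ℂ] Q.CPA where
  toFun := Q.cycDer a
  map_add' u v := by
    ext (_ | l)
    · simp only [cycDer_inl, coefAt_add, Pi.add_apply]; split_ifs <;> simp
    · simp only [cycDer_inr, coefAt_add, Pi.add_apply, Finset.sum_add_distrib]
  map_smul' c u := by
    ext (_ | l)
    · simp only [cycDer_inl, coefAt_smul, Pi.smul_apply, smul_eq_mul, RingHom.id_apply]
      split_ifs <;> simp
    · simp only [cycDer_inr, coefAt_smul, Pi.smul_apply, smul_eq_mul, RingHom.id_apply,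
        Finset.mul_sum]

@[simp] lemma cycDerₗ_apply (a : Q.A) (S : Q.CPA) : Q.cycDerₗ a S = Q.cycDer a S := rfl

lemma coefAt_congr {u v : Q.CPA} (x : V) (l : List Q.A)
    (h : ∀ q : Q.Pth, q.length ≤ l.length → u q = v q) :
    coefAt Q u x l = coefAt Q v x l := by
  unfold coefAt
  split_ifs
  · exact h _ (Nat.zero_le _)
  · exact h _ le_rfl
  · rfl

lemma cycDer_congr (a : Q.A) {u v : Q.CPA} (p : Q.Pth)
    (h : ∀ q : Q.Pth, q.length ≤ p.length + 1 → u q = v q) :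
    Q.cycDer a u p = Q.cycDer a v p := by
  rcases p with x | l
  · rw [cycDer_inl, cycDer_inl, coefAt_congr x [a] fun q hq => h q hq]
  · refine Finset.sum_congr rfl fun m _ => coefAt_congr _ _ fun q hq => h q ?_
    simpa [Pth.length] using hq

lemma coefAt_pathδ (c : Q.PathsPos) (x : V) {w : List Q.A} (hw : w ≠ []) :
    coefAt Q (Q.pathδ (Sum.inr c)) x w = if w = c.1 then 1 else 0 := by
  unfold coefAt pathδ
  rw [dif_neg hw]
  split_ifs with hc hwc <;> simp_all [Subtype.ext_iff]
  exact hc c.2.2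

lemma cycDer_pathδ_rotate (a : Q.A) {c c' : Q.PathsPos} (h : c'.1 = c.1.rotate 1) :
    Q.cycDer a (Q.pathδ (Sum.inr c)) = Q.cycDer a (Q.pathδ (Sum.inr c')) := by
  ext (x | l)
  · simp only [cycDer_inl, coefAt_pathδ _ _ (List.cons_ne_nil a []), h, eq_comm (a := [a]),
      List.rotate_eq_singleton_iff]
  · have hne (m : ℕ) : (a :: l.1).rotate m ≠ [] := by simp
    have key (m : ℕ) : (a :: l.1).rotate (m + 1) = c.1.rotate 1 ↔ (a :: l.1).rotate m = c.1 := by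
      rw [← List.rotate_rotate]
      exact (List.rotate_injective 1).eq_iff
    simp only [cycDer_inr, coefAt_pathδ _ _ (hne _), h, ← key,
      ← List.length_cons (a := a) (as := l.1)]
    exact List.sum_range_rotate_succ (a :: l.1) fun w => if w = c.1.rotate 1 then 1 else 0

lemma span_rotDiffs_le_ker_cycDerₗ (a : Q.A) :
    Submodule.span ℂ Q.rotDiffs ≤ LinearMap.ker (Q.cycDerₗ a) := by
  rw [Submodule.span_le]
  rintro _ ⟨c, c', -, hc', rfl⟩
  simp only [SetLike.mem_coe, LinearMap.mem_ker, map_sub]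
  exact sub_eq_zero.mpr (cycDer_pathδ_rotate a hc')

variable (Q) in
def mAdicClosure (H : AddSubgroup Q.CPA) : AddSubgroup Q.CPA where
  carrier := Q.mAdicCl H
  zero_mem' n := ⟨0, H.zero_mem, fun _ _ => rfl⟩
  add_mem' {u v} hu hv n := by
    obtain ⟨u', hu', hu⟩ := hu n
    obtain ⟨v', hv', hv⟩ := hv n
    exact ⟨u' + v', H.add_mem hu' hv', fun p hp => by simp [hu p hp, hv p hp]⟩
  neg_mem' {u} hu n := by
    obtain ⟨u', hu', hu⟩ := hu n
    exact ⟨-u', H.neg_mem hu', fun p hp => by simp [hu p hp]⟩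

lemma cycEquiv_iff (S S' : Q.CPA) :
    Q.CycEquiv S S' ↔ S - S' ∈ Q.mAdicClosure (Submodule.span ℂ Q.rotDiffs).toAddSubgroup :=
  Iff.rfl

variable (Q) in
lemma cycEquiv_equivalence : Equivalence Q.CycEquiv where
  refl S := by simp [cycEquiv_iff, zero_mem]
  symm h := by simpa [cycEquiv_iff] using neg_mem ((cycEquiv_iff _ _).mp h)
  trans h h' := by
    simpa [cycEquiv_iff] using add_mem ((cycEquiv_iff _ _).mp h) ((cycEquiv_iff _ _).mp h')

lemma cycDer_eq_of_cycEquiv (a : Q.A) {S S' : Q.CPA} (h : Q.CycEquiv S S') :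
    Q.cycDer a S = Q.cycDer a S' := by
  funext p
  obtain ⟨v, hv, hSv⟩ := h (p.length + 2)
  have hv0 : Q.cycDer a v = 0 := span_rotDiffs_le_ker_cycDerₗ a hv
  have hdiff : Q.cycDerₗ a (S - S') p = 0 := by
    rw [cycDerₗ_apply, cycDer_congr a p fun q hq => hSv q (Nat.lt_succ_of_le hq), hv0,
      Pi.zero_apply]
  rwa [map_sub, Pi.sub_apply, cycDerₗ_apply, cycDerₗ_apply, sub_eq_zero] at hdiff

end Quiv

open Quiv in
theorem stmt14_general (V : Type) (Q : Quiv V) :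
    Equivalence Q.CycEquiv ∧
    ∀ S S' : Q.CPA, Q.IsPotential S → Q.IsPotential S' → Q.CycEquiv S S' →
      Q.jacobIdeal S = Q.jacobIdeal S' := by
  refine ⟨cycEquiv_equivalence Q, fun S S' _ _ h => ?_⟩
  have hder : (fun a => Q.cycDer a S) = fun a => Q.cycDer a S' :=
    funext fun a => cycDer_eq_of_cycEquiv a h
  rw [jacobIdeal, jacobIdeal, hder]

open Quiv in
/-- Cyclic equivalence of potentials is an equivalence relation, and it is compatible
with Jacobian ideals: if two potentials `S` and `S'` on a quiver `Q` are cyclically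
equivalent, then `J(S) = J(S')`, and hence `𝒫(Q,S) = 𝒫(Q,S')`. -/
theorem stmt14 (V : Type) [Fintype V] [DecidableEq V] (Q : Quiv V) [Fintype Q.A]
    (hloopfree : ∀ a : Q.A, Q.src a ≠ Q.tgt a) :
    Equivalence Q.CycEquiv ∧
    ∀ S S' : Q.CPA, Q.IsPotential S → Q.IsPotential S' → Q.CycEquiv S S' →
      Q.jacobIdeal S = Q.jacobIdeal S' :=
  stmt14_general V Q
end

section
/- In the graded quiver Q̄ associated to a QP (Q,S) (arrows of Q in degree 0, reversed arrows a* in degree −1, loops t_i in degree −2), the map d defined by d(a) = 0, d(a*) = ∂_a(S), d(t_i) = e_i(Σ_{a∈Q₁}[a,a*])e_i, extended by the graded Leibniz rule, satisfies d(d(t_i)) = 0 for every vertex i; i.e., d² vanishes on the degree −2 generators. -/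
open scoped Classical

/-!
The element `∑ₐ (a ∂ₐS − (∂ₐS) a)` already vanishes before it is cut down by `e_i`.
For a path `p = α₁ ⋯ α_ℓ`, the coefficient of `p` in `a ∂ₐS` is zero unless `a = α₁`, and then it
is the coefficient of `α₂ ⋯ α_ℓ` in `∂_{α₁}S`, i.e. the sum of the coefficients of `S` over all
rotations of `p`. Symmetrically only `a = α_ℓ` contributes to `(∂ₐS) a`, with the sum of the
coefficients of `S` over the rotations of `α_ℓ α₁ ⋯ α_{ℓ-1}`, a rotation of `p`; the two sums agree.
-/

theorem List.cyclicPermutations_eq_ofFn {α : Type*} {l : List α} (hl : l ≠ []) :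
    l.cyclicPermutations = List.ofFn fun i : Fin l.length => l.rotate i :=
  List.ext_getElem (by simp [hl]) fun n _ _ => by simp

theorem List.sum_range_length_rotate {α M : Type*} [AddCommMonoid M] (f : List α → M)
    (l : List α) (k : ℕ) :
    ∑ m ∈ Finset.range l.length, f ((l.rotate k).rotate m) =
      ∑ m ∈ Finset.range l.length, f (l.rotate m) := by
  rcases eq_or_ne l [] with rfl | hl
  · simp
  have hsum : ∀ l' : List α, l' ≠ [] →
      ∑ m ∈ Finset.range l'.length, f (l'.rotate m) = (l'.cyclicPermutations.map f).sum := by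
    intro l' hl'
    rw [List.cyclicPermutations_eq_ofFn hl', List.map_ofFn, List.sum_ofFn, Finset.sum_range]
    rfl
  have hlk : l.rotate k ≠ [] := by simpa using hl
  rw [← l.length_rotate k, hsum _ hlk, l.length_rotate, hsum _ hl, List.cyclicPermutations_rotate]
  exact ((List.IsRotated.forall _ k).perm.map f).sum_eq

theorem List.getLast_cons_dropLast {α : Type*} {l : List α} (hl : l ≠ []) :
    l.getLast hl :: l.dropLast = l.rotate (l.length - 1) := by
  obtain ⟨m, c, rfl⟩ : ∃ m c, l = m ++ [c] := ⟨_, _, (List.dropLast_append_getLast hl).symm⟩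
  simp [List.rotate_append_length_eq]

namespace Quiv

variable {V : Type} {Q : Quiv V}

theorem coefAt_nil (u : Q.CPA) (x : V) : Q.coefAt u x [] = u (Sum.inl x) :=
  dif_pos rfl

theorem coefAt_of_ne_nil (u : Q.CPA) (x y : V) {l : List Q.A} (hl : l ≠ []) :
    Q.coefAt u x l = Q.coefAt u y l := by
  simp only [coefAt, dif_neg hl]

theorem coefAt_arrowδ (a : Q.A) (x : V) (l : List Q.A) :
    Q.coefAt (Q.arrowδ a) x l = if l = [a] then 1 else 0 := by
  unfold coefAt arrowδ
  by_cases ha : l = [a]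
  · subst ha
    rw [dif_neg (List.cons_ne_nil a []), dif_pos]
    · simp
    · exact List.isChain_singleton a
  · split_ifs <;> simp_all

theorem coefAt_cycDer_of_ne_nil (a : Q.A) (S : Q.CPA) (x : V) {l : List Q.A} (hl : l ≠ [])
    (hc : l.IsChain Q.Comp) :
    Q.coefAt (Q.cycDer a S) x l =
      ∑ m ∈ Finset.range (l.length + 1), Q.coefAt S (Q.tgt a) ((a :: l).rotate m) := by
  rw [coefAt, dif_neg hl, dif_pos]
  · rfl
  · exact hc

theorem cycDer_apply_inl_src_eq_tgt (a : Q.A) (S : Q.CPA) :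
    Q.cycDer a S (Sum.inl (Q.src a)) = Q.cycDer a S (Sum.inl (Q.tgt a)) := by
  simp only [cycDer, true_and, and_true, eq_comm,
    coefAt_of_ne_nil S (Q.src a) (Q.tgt a) (List.cons_ne_nil a [])]

theorem conv_zero_left (v : Q.CPA) : Q.conv 0 v = 0 := by
  ext (_ | _) <;> simp [conv, coefAt]

theorem conv_zero_right (u : Q.CPA) : Q.conv u 0 = 0 := by
  ext (_ | _) <;> simp [conv, coefAt]

theorem conv_arrowδ_left_apply (a : Q.A) (u : Q.CPA) (l : Q.PathsPos) :
    Q.conv (Q.arrowδ a) u (Sum.inr l) =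
      if l.1.head l.2.1 = a then Q.coefAt u (Q.src (l.1.getLast l.2.1)) l.1.tail else 0 := by
  obtain ⟨_ | ⟨b, q⟩, hne, -⟩ := l
  · exact absurd rfl hne
  simp only [conv, coefAt_arrowδ]
  rw [Finset.sum_eq_single 1]
  · by_cases hb : b = a <;> simp [hb]
  · intro n hn hn1
    rw [if_neg, zero_mul]
    intro h
    have := congrArg List.length h
    simp only [List.length_take, List.length_cons, List.length_nil] at this
    simp only [List.length_cons, Finset.mem_range] at hn
    omega
  · simp

theorem conv_arrowδ_right_apply (u : Q.CPA) (a : Q.A) (l : Q.PathsPos) :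
    Q.conv u (Q.arrowδ a) (Sum.inr l) =
      if l.1.getLast l.2.1 = a then Q.coefAt u (Q.tgt (l.1.head l.2.1)) l.1.dropLast else 0 := by
  obtain ⟨l, hne, -⟩ := l
  obtain ⟨m, c, rfl⟩ : ∃ m c, l = m ++ [c] :=
    ⟨_, _, (List.dropLast_append_getLast hne).symm⟩
  simp only [conv, coefAt_arrowδ]
  rw [Finset.sum_eq_single m.length]
  · by_cases hc : c = a <;> simp [hc]
  · intro n hn hnm
    rw [if_neg, mul_zero]
    intro h
    have := congrArg List.length h
    simp only [List.length_drop, List.length_append, List.length_singleton] at this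
    simp only [List.length_append, List.length_singleton, Finset.mem_range] at hn
    omega
  · simp

theorem coefAt_cycDer_tail_eq_dropLast (S : Q.CPA) (l : Q.PathsPos) :
    Q.coefAt (Q.cycDer (l.1.head l.2.1) S) (Q.src (l.1.getLast l.2.1)) l.1.tail =
      Q.coefAt (Q.cycDer (l.1.getLast l.2.1) S) (Q.tgt (l.1.head l.2.1)) l.1.dropLast := by
  obtain ⟨l, hne, hch⟩ := l
  rcases l with _ | ⟨b, _ | ⟨c, q⟩⟩
  · exact absurd rfl hne
  · -- both sides are the constant term of `∂_b S`, evaluated at `src b` and at `tgt b`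
    simpa only [List.head_cons, List.getLast_singleton, List.tail_cons, List.dropLast_singleton,
      coefAt_nil] using cycDer_apply_inl_src_eq_tgt b S
  set l := b :: c :: q with hl
  have hdrop : l.dropLast ≠ [] := by simp [hl]
  have hlen : l.dropLast.length + 1 = l.length := by simp [hl]
  rw [List.head_cons, List.tail_cons,
    coefAt_cycDer_of_ne_nil _ _ _ (List.cons_ne_nil c q) hch.tail,
    coefAt_cycDer_of_ne_nil _ _ _ hdrop hch.dropLast, List.getLast_cons_dropLast, hlen,
    List.sum_range_length_rotate (fun m => Q.coefAt S _ m)]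
  exact Finset.sum_congr rfl fun k _ => coefAt_of_ne_nil S _ _ (by simp)

theorem sum_conv_arrowδ_cycDer_sub_conv_cycDer_arrowδ [Fintype Q.A] (S : Q.CPA) :
    ∑ a : Q.A, (Q.conv (Q.arrowδ a) (Q.cycDer a S) - Q.conv (Q.cycDer a S) (Q.arrowδ a)) = 0 := by
  ext (x | l)
  · simp [conv, arrowδ]
  · simp only [Finset.sum_apply, Pi.sub_apply, Finset.sum_sub_distrib, conv_arrowδ_left_apply,
      conv_arrowδ_right_apply, Finset.sum_ite_eq, Finset.mem_univ, if_true, Pi.zero_apply]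
    exact sub_eq_zero.mpr (coefAt_cycDer_tail_eq_dropLast S l)

end Quiv

open Quiv in
theorem stmt16_general (V : Type) (Q : Quiv V) [Fintype Q.A]
    (S : Q.CPA) :
    ∀ i : V,
      Q.conv (Q.idem i)
        (Q.conv
          (∑ a : Q.A,
            (Q.conv (Q.arrowδ a) (Q.cycDer a S) - Q.conv (Q.cycDer a S) (Q.arrowδ a)))
          (Q.idem i)) = 0 := by
  intro i
  rw [sum_conv_arrowδ_cycDer_sub_conv_cycDer_arrowδ, conv_zero_left, conv_zero_right]

open Quiv in
/-- In the complete Ginzburg dg algebra of a QP `(Q,S)`, the differential `d` (with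
`d(a) = 0`, `d(a*) = ∂_a S` and `d(t_i) = e_i (∑_{a∈Q₁} [a,a*]) e_i`, extended by the
graded Leibniz rule) satisfies `d(d(t_i)) = 0` for every vertex `i`: indeed
`d(d(t_i)) = e_i (∑_{a∈Q₁} (a ∂_a S − (∂_a S) a)) e_i`, and this element of
`ℂ⟨⟨Q⟩⟩` vanishes. -/
theorem stmt16 (V : Type) [Fintype V] [DecidableEq V] (Q : Quiv V) [Fintype Q.A]
    (hloopfree : ∀ a : Q.A, Q.src a ≠ Q.tgt a)
    (h2acyclic : ∀ a b : Q.A, ¬(Q.src a = Q.tgt b ∧ Q.src b = Q.tgt a))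
    (S : Q.CPA) (hS : Q.IsPotential S) :
    ∀ i : V,
      Q.conv (Q.idem i)
        (Q.conv
          (∑ a : Q.A,
            (Q.conv (Q.arrowδ a) (Q.cycDer a S) - Q.conv (Q.cycDer a S) (Q.arrowδ a)))
          (Q.idem i)) = 0 :=
  stmt16_general V Q S
end
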